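/- arXiv:0812.4718 — 4 statements merged into one kernel-verified Lean document; each statement's English description precedes it below -/
import Mathlib

section
/- The energy H = ⟨M, ω⟩ is a first integral of the system Ṁ = M × ω, ṅ = k n × ω, where M = Jω − d⟨n,ω⟩n + dω (i.e., M = Iω + d n×(n×ω) with I = J − dE), assuming ⟨n,n⟩ = 1. -/
/-!
Differentiating `H = ⟨M, ω⟩` gives `⟨Ṁ, ω⟩ + ⟨M, ω̇⟩`. The first term vanishes since
`Ṁ = M × ω ⊥ ω`. For the second, differentiating `M = Jω − d⟨n,ω⟩n` and using the symmetry
of `J` shows `⟨M, ω̇⟩ = ⟨Ṁ, ω⟩ + 2d⟨n,ω⟩⟨ṅ,ω⟩`, and `ṅ = k (n × ω) ⊥ ω`.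
-/

open Matrix

section Calculus

variable {ι : Type*} [Fintype ι] {u v : ℝ → ι → ℝ} {u' v' : ι → ℝ} {t : ℝ}

theorem HasDerivAt.dotProduct (hu : HasDerivAt u u' t) (hv : HasDerivAt v v' t) :
    HasDerivAt (fun s => u s ⬝ᵥ v s) (u' ⬝ᵥ v t + u t ⬝ᵥ v') t := by
  simp only [_root_.dotProduct, ← Finset.sum_add_distrib]
  exact HasDerivAt.fun_sum fun i _ =>
    (hasDerivAt_pi.1 hu i).mul (hasDerivAt_pi.1 hv i)

theorem HasDerivAt.const_mulVec (A : Matrix ι ι ℝ) (hv : HasDerivAt v v' t) :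
    HasDerivAt (fun s => A *ᵥ v s) (A *ᵥ v') t :=
  (LinearMap.toContinuousLinearMap A.mulVecLin).hasFDerivAt.comp_hasDerivAt t hv

end Calculus

section Moment

variable {ι : Type*} [Fintype ι] (A : Matrix ι ι ℝ) (d : ℝ)

def moment (n ω : ι → ℝ) : ι → ℝ := A *ᵥ ω - (d * (n ⬝ᵥ ω)) • n

theorem hasDerivAt_moment {n ω : ℝ → ι → ℝ} {n' ω' : ι → ℝ} {t : ℝ}
    (hn : HasDerivAt n n' t) (hω : HasDerivAt ω ω' t) :
    HasDerivAt (fun s => moment A d (n s) (ω s))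
      (A *ᵥ ω' - ((d * (n' ⬝ᵥ ω t + n t ⬝ᵥ ω')) • n t + (d * (n t ⬝ᵥ ω t)) • n')) t := by
  rw [add_comm]
  exact (hω.const_mulVec A).fun_sub (((hn.dotProduct hω).const_mul d).fun_smul hn)

theorem moment_dotProduct_eq {n ω n' ω' : ι → ℝ} (hA : A.IsSymm) :
    moment A d n ω ⬝ᵥ ω' =
      (A *ᵥ ω' - ((d * (n' ⬝ᵥ ω + n ⬝ᵥ ω')) • n + (d * (n ⬝ᵥ ω)) • n')) ⬝ᵥ ω
        + 2 * d * (n ⬝ᵥ ω) * (n' ⬝ᵥ ω) := by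
  have hsymm : A *ᵥ ω ⬝ᵥ ω' = A *ᵥ ω' ⬝ᵥ ω := by
    rw [dotProduct_comm, dotProduct_mulVec, ← mulVec_transpose, hA.eq]
  simp only [moment, sub_dotProduct, add_dotProduct, smul_dotProduct, smul_eq_mul, hsymm]
  rw [dotProduct_comm n ω', dotProduct_comm n' ω]
  ring

end Moment

theorem statement3_general (J₁ J₂ J₃ d k : ℝ)
    (J : Matrix (Fin 3) (Fin 3) ℝ) (hJ : J = Matrix.diagonal ![J₁, J₂, J₃])
    (ω n : ℝ → Fin 3 → ℝ) (ω' : ℝ → Fin 3 → ℝ)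
    (hω : ∀ t, HasDerivAt ω (ω' t) t)
    (M : ℝ → Fin 3 → ℝ)
    (hMdef : ∀ t, M t = J.mulVec (ω t) - (d * (n t ⬝ᵥ ω t)) • n t)
    (hM : ∀ t, HasDerivAt M (crossProduct (M t) (ω t)) t)
    (hn : ∀ t, HasDerivAt n (k • crossProduct (n t) (ω t)) t) :
    ∀ t, HasDerivAt (fun s => M s ⬝ᵥ ω s) 0 t := by
  intro t
  have hM_eq : M = fun s => moment J d (n s) (ω s) := funext hMdef
  have hMω : crossProduct (M t) (ω t) ⬝ᵥ ω t = 0 := by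
    rw [dotProduct_comm, dot_cross_self]
  have hnω : k • crossProduct (n t) (ω t) ⬝ᵥ ω t = 0 := by
    rw [smul_dotProduct, dotProduct_comm, dot_cross_self, smul_zero]
  have hMω' : M t ⬝ᵥ ω' t = 0 := by
    have hderiv := (hM t).unique (hM_eq ▸ hasDerivAt_moment J d (hn t) (hω t))
    rw [hM_eq, moment_dotProduct_eq J d (hJ ▸ isSymm_diagonal _), ← hderiv, hMω, hnω]
    ring
  simpa [hMω, hMω'] using (hM t).dotProduct (hω t)

/-- The energy `H = ⟨M, ω⟩` is a first integral of the system
`Ṁ = M × ω`, `ṅ = k (n × ω)`, where `M = Jω − d⟨n,ω⟩n`, assuming `⟨n,n⟩ = 1`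
and `Jᵢ > d > 0`. -/
theorem statement3 (J₁ J₂ J₃ d k : ℝ) (hd : 0 < d)
    (h1 : d < J₁) (h2 : d < J₂) (h3 : d < J₃)
    (J : Matrix (Fin 3) (Fin 3) ℝ) (hJ : J = Matrix.diagonal ![J₁, J₂, J₃])
    (ω n : ℝ → Fin 3 → ℝ) (ω' : ℝ → Fin 3 → ℝ)
    (hω : ∀ t, HasDerivAt ω (ω' t) t)
    (hunit : ∀ t, n t ⬝ᵥ n t = 1)
    (M : ℝ → Fin 3 → ℝ)
    (hMdef : ∀ t, M t = J.mulVec (ω t) - (d * (n t ⬝ᵥ ω t)) • n t)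
    (hM : ∀ t, HasDerivAt M (crossProduct (M t) (ω t)) t)
    (hn : ∀ t, HasDerivAt n (k • crossProduct (n t) (ω t)) t) :
    ∀ t, HasDerivAt (fun s => M s ⬝ᵥ ω s) 0 t :=
  statement3_general J₁ J₂ J₃ d k J hJ ω n ω' hω M hMdef hM hn
end

section
/- If λ = Jᵢ (for i ∈ {1,2,3}), then the roots of the quadratic λΨ(z) + ψ(z) = 0 are c₁ = (2d − Aᵢ)/(d Aⱼ Aₖ) and c₂ = aᵢ = 1/(Aᵢ Jᵢ), where Ψ(z) = d det(A) z² − Tr(AJ) z + 2 and ψ(z) = (4 det J − d Tr(AJ)) z − (Tr J − 2d). -/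
/-!
At `λ = Jᵢ` the quadratic `Jᵢ Ψ + ψ` has leading coefficient `a = Jᵢ d det A` and constant
term `2Jᵢ - Tr J + 2d = 2d - Aᵢ`, so by Vieta it suffices to check that `c₁ c₂ = (2d - Aᵢ)/a`
and that `a (c₁ + c₂)` is the linear coefficient. The latter follows from the two expressions
`Tr(AJ) = Aⱼ Aₖ + 2 Aᵢ Jᵢ = 4 Jⱼ Jₖ - Aᵢ²` of the trace.
-/

theorem mul_add_trace_eq_mul_sub_mul_sub (Ji Jj Jk d Ai Aj Ak z : ℝ)
    (hAi : Ai = Jj + Jk - Ji) (hAj : Aj = Jk + Ji - Jj) (hAk : Ak = Ji + Jj - Jk)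
    (h : d * Ai * Aj * Ak * Ji ≠ 0) :
    Ji * (d * (Ai * Aj * Ak) * z ^ 2 - (Ai * Ji + Aj * Jj + Ak * Jk) * z + 2)
        + ((4 * (Ji * Jj * Jk) - d * (Ai * Ji + Aj * Jj + Ak * Jk)) * z
          - (Ji + Jj + Jk - 2 * d))
      = Ji * d * (Ai * Aj * Ak) * (z - (2 * d - Ai) / (d * Aj * Ak)) * (z - 1 / (Ai * Ji)) := by
  have hd : d ≠ 0 := by rintro rfl; simp at h
  have hAi₀ : Ai ≠ 0 := by rintro rfl; simp at h
  have hAj₀ : Aj ≠ 0 := by rintro rfl; simp at h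
  have hAk₀ : Ak ≠ 0 := by rintro rfl; simp at h
  have hJi₀ : Ji ≠ 0 := by rintro rfl; simp at h
  have roots_mul : Ji * d * (Ai * Aj * Ak) * ((2 * d - Ai) / (d * Aj * Ak) * (1 / (Ai * Ji)))
      = 2 * d - Ai := by
    field_simp
  have roots_add : Ji * d * (Ai * Aj * Ak) * ((2 * d - Ai) / (d * Aj * Ak) + 1 / (Ai * Ji))
      = Ji * Ai * (2 * d - Ai) + d * (Aj * Ak) := by
    field_simp
  subst hAi hAj hAk
  linear_combination z * roots_add - roots_mul

/-- If `λ = Jᵢ` (for `i ∈ {1,2,3}`), then the roots of the quadratic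
`λΨ(z) + ψ(z) = 0` are `c₁ = (2d − Aᵢ)/(d Aⱼ Aₖ)` and `c₂ = aᵢ = 1/(Aᵢ Jᵢ)`:
precisely, `Jᵢ·Ψ(z) + ψ(z) = Jᵢ·d·det(A)·(z − (2d−Aᵢ)/(dAⱼAₖ))·(z − 1/(AᵢJᵢ))`
as polynomials in `z`, for each cyclic permutation `(i,j,k)` of `(1,2,3)`. -/
theorem statement7 (J₁ J₂ J₃ d : ℝ)
    (A₁ A₂ A₃ detA detJ trAJ trJ : ℝ)
    (hA₁ : A₁ = J₂ + J₃ - J₁) (hA₂ : A₂ = J₃ + J₁ - J₂) (hA₃ : A₃ = J₁ + J₂ - J₃)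
    (hdetA : detA = A₁ * A₂ * A₃) (hdetJ : detJ = J₁ * J₂ * J₃)
    (htrAJ : trAJ = A₁ * J₁ + A₂ * J₂ + A₃ * J₃) (htrJ : trJ = J₁ + J₂ + J₃)
    (h₁ : d * A₁ * A₂ * A₃ * J₁ ≠ 0) (h₂ : d * A₁ * A₂ * A₃ * J₂ ≠ 0)
    (h₃ : d * A₁ * A₂ * A₃ * J₃ ≠ 0)
    (Ψ ψ : ℝ → ℝ)
    (hΨ : ∀ z, Ψ z = d * detA * z ^ 2 - trAJ * z + 2)
    (hψ : ∀ z, ψ z = (4 * detJ - d * trAJ) * z - (trJ - 2 * d)) :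
    (∀ z : ℝ, J₁ * Ψ z + ψ z
        = J₁ * d * detA * (z - (2 * d - A₁) / (d * A₂ * A₃)) * (z - 1 / (A₁ * J₁))) ∧
    (∀ z : ℝ, J₂ * Ψ z + ψ z
        = J₂ * d * detA * (z - (2 * d - A₂) / (d * A₃ * A₁)) * (z - 1 / (A₂ * J₂))) ∧
    (∀ z : ℝ, J₃ * Ψ z + ψ z
        = J₃ * d * detA * (z - (2 * d - A₃) / (d * A₁ * A₂)) * (z - 1 / (A₃ * J₃))) := by
  subst hdetA hdetJ htrAJ htrJ
  refine ⟨fun z => ?_, fun z => ?_, fun z => ?_⟩ <;> rw [hΨ, hψ]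
  · exact mul_add_trace_eq_mul_sub_mul_sub J₁ J₂ J₃ d A₁ A₂ A₃ z hA₁ hA₂ hA₃ h₁
  · linear_combination mul_add_trace_eq_mul_sub_mul_sub J₂ J₃ J₁ d A₂ A₃ A₁ z hA₂ hA₃ hA₁
      (by convert h₂ using 1; ring)
  · linear_combination mul_add_trace_eq_mul_sub_mul_sub J₃ J₁ J₂ d A₃ A₁ A₂ z hA₃ hA₁ hA₂
      (by convert h₃ using 1; ring)
end

section
/- For i ∈ {1,2,3} and λ = Jᵢ, the root c₁ = (2d − Aᵢ)/(d Aⱼ Aₖ) satisfies c₁ < a₁ = 1/(A₁J₁), provided 0 < d < J₁ < J₂ < J₃ and A₃ > 0. -/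
/-! After clearing denominators, each claim says that a function of `d` which is affine
on `[0, J₁]` is positive there. It is positive at `d = 0`; at `d = J₁` it vanishes for
`i = 2, 3` because `A₂ + A₃ = 2 J₁`, and for `i = 1` it equals
`4 J₁ (J₂ − J₁)(J₃ − J₁) > 0`. -/

lemma div_lt_one_div_of_mul_lt {x y z : ℝ} (hy : 0 < y) (hz : 0 < z) (h : x * z < y) :
    x / y < 1 / z := by
  rwa [div_lt_div_iff₀ hy hz, one_mul]

lemma two_mul_sub_div_lt_one_div_of_add_eq {d J A B C : ℝ} (hd : 0 < d) (hdJ : d < J)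
    (hA : 0 < A) (hB : 0 < B) (hC : 0 < C) (hBC : B + C = 2 * J) :
    (2 * d - B) / (d * C * A) < 1 / (A * J) := by
  have key : d * C * A - (2 * d - B) * (A * J) = A * B * (J - d) := by
    rw [show C = 2 * J - B by linarith]; ring
  have hpos : 0 < A * B * (J - d) := mul_pos (mul_pos hA hB) (sub_pos.2 hdJ)
  exact div_lt_one_div_of_mul_lt (by positivity) (mul_pos hA (hd.trans hdJ)) (by linarith)

lemma two_mul_sub_div_lt_one_div_of_lt {d J₁ J₂ J₃ : ℝ} (hd : 0 < d) (h1 : d < J₁)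
    (h2 : J₁ < J₂) (h3 : J₂ < J₃) (hA₃ : 0 < J₁ + J₂ - J₃) :
    (2 * d - (J₂ + J₃ - J₁)) / (d * (J₃ + J₁ - J₂) * (J₁ + J₂ - J₃))
      < 1 / ((J₂ + J₃ - J₁) * J₁) := by
  have hA₁ : 0 < J₂ + J₃ - J₁ := by linarith
  have hA₂ : 0 < J₃ + J₁ - J₂ := by linarith
  have hJ₁ : 0 < J₁ := hd.trans h1
  have key : d * (J₃ + J₁ - J₂) * (J₁ + J₂ - J₃)
        - (2 * d - (J₂ + J₃ - J₁)) * ((J₂ + J₃ - J₁) * J₁)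
      = (J₂ + J₃ - J₁) ^ 2 * (J₁ - d) + 4 * d * (J₂ - J₁) * (J₃ - J₁) := by
    ring
  have hpos₁ : 0 < (J₂ + J₃ - J₁) ^ 2 * (J₁ - d) := mul_pos (by positivity) (sub_pos.2 h1)
  have hpos₂ : 0 < 4 * d * (J₂ - J₁) * (J₃ - J₁) :=
    mul_pos (mul_pos (by positivity) (sub_pos.2 h2)) (sub_pos.2 (h2.trans h3))
  exact div_lt_one_div_of_mul_lt (by positivity) (by positivity) (by linarith)

/-- For each `i ∈ {1,2,3}` (with `(i,j,k)` a permutation of `(1,2,3)`),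
the root `c₁ = (2d − Aᵢ)/(d Aⱼ Aₖ)` satisfies `c₁ < a₁ = 1/(A₁J₁)`, provided
`0 < d < J₁ < J₂ < J₃` and `A₃ > 0`. -/
theorem statement9 (J₁ J₂ J₃ d : ℝ)
    (hd : 0 < d) (h1 : d < J₁) (h2 : J₁ < J₂) (h3 : J₂ < J₃)
    (A₁ A₂ A₃ a₁ : ℝ)
    (hA₁ : A₁ = J₂ + J₃ - J₁) (hA₂ : A₂ = J₃ + J₁ - J₂) (hA₃ : A₃ = J₁ + J₂ - J₃)
    (hA₃pos : 0 < A₃) (ha₁ : a₁ = 1 / (A₁ * J₁)) :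
    (2 * d - A₁) / (d * A₂ * A₃) < a₁ ∧
    (2 * d - A₂) / (d * A₃ * A₁) < a₁ ∧
    (2 * d - A₃) / (d * A₁ * A₂) < a₁ := by
  have hA₁pos : 0 < A₁ := by linarith
  have hA₂pos : 0 < A₂ := by linarith
  have hA₂₃ : A₂ + A₃ = 2 * J₁ := by linarith
  subst ha₁
  refine ⟨?_, two_mul_sub_div_lt_one_div_of_add_eq hd h1 hA₁pos hA₂pos hA₃pos hA₂₃, ?_⟩
  · subst hA₁ hA₂ hA₃
    exact two_mul_sub_div_lt_one_div_of_lt hd h1 h2 h3 hA₃pos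
  · rw [mul_right_comm]
    exact two_mul_sub_div_lt_one_div_of_add_eq hd h1 hA₁pos hA₃pos hA₂pos
      (by rw [add_comm, hA₂₃])
end

section
/- If nᵢ² = (aᵢ−z₁)(aᵢ−z₂)/((aᵢ−aⱼ)(aᵢ−aₖ)) with 0 < a₁ < a₂ < a₃ pairwise distinct, then all three quantities nᵢ² are nonnegative if and only if (z₁,z₂) ∈ [a₁,a₂]×[a₂,a₃] ∪ [a₂,a₃]×[a₁,a₂]. -/
/-!
The denominators `(aᵢ - aⱼ)(aᵢ - aₖ)` have signs `+, -, +`, so the condition says that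
`p(x) = (x - z₁)(x - z₂)` satisfies `p(a₁) ≥ 0`, `p(a₂) ≤ 0`, `p(a₃) ≥ 0`. The middle inequality
puts `a₂` between the roots `z₁, z₂`; once that is known, `p(a₁) ≥ 0` and `p(a₃) ≥ 0` say exactly
that `a₁` lies below the smaller root and `a₃` above the larger one.
-/

section Interlacing

variable {K : Type*} [Field K] [LinearOrder K] [IsStrictOrderedRing K] {a₁ a₂ a₃ z w : K}

theorem sub_mul_sub_nonneg_iff_of_lt_right (h : a₁ < w) : 0 ≤ (a₁ - z) * (a₁ - w) ↔ a₁ ≤ z := by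
  rw [← neg_mul_neg, neg_sub, neg_sub, mul_nonneg_iff_of_pos_right (sub_pos.2 h), sub_nonneg]

theorem sub_mul_sub_nonneg_iff_of_gt_left (h : z < a₃) : 0 ≤ (a₃ - z) * (a₃ - w) ↔ w ≤ a₃ := by
  rw [mul_nonneg_iff_of_pos_left (sub_pos.2 h), sub_nonneg]

theorem sub_mul_sub_nonneg_and_nonneg_iff_of_le (h12 : a₁ < a₂) (h23 : a₂ < a₃) (hz : z ≤ a₂)
    (hw : a₂ ≤ w) :
    (0 ≤ (a₁ - z) * (a₁ - w) ∧ 0 ≤ (a₃ - z) * (a₃ - w)) ↔ a₁ ≤ z ∧ w ≤ a₃ :=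
  and_congr (sub_mul_sub_nonneg_iff_of_lt_right (h12.trans_le hw))
    (sub_mul_sub_nonneg_iff_of_gt_left (hz.trans_lt h23))

theorem sub_mul_sub_alternating_iff (h12 : a₁ < a₂) (h23 : a₂ < a₃) :
    (0 ≤ (a₁ - z) * (a₁ - w) ∧ (a₂ - z) * (a₂ - w) ≤ 0 ∧ 0 ≤ (a₃ - z) * (a₃ - w)) ↔
      ((a₁ ≤ z ∧ z ≤ a₂) ∧ (a₂ ≤ w ∧ w ≤ a₃)) ∨ ((a₂ ≤ z ∧ z ≤ a₃) ∧ (a₁ ≤ w ∧ w ≤ a₂)) := by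
  have ordered {z w : K} (hz : z ≤ a₂) (hw : a₂ ≤ w) :=
    sub_mul_sub_nonneg_and_nonneg_iff_of_le h12 h23 hz hw
  constructor
  · rintro ⟨h1, h2, h3⟩
    rcases mul_nonpos_iff.1 h2 with ⟨hz, hw⟩ | ⟨hz, hw⟩
    · obtain ⟨hz₁, hw₃⟩ := (ordered (sub_nonneg.1 hz) (sub_nonpos.1 hw)).1 ⟨h1, h3⟩
      exact .inl ⟨⟨hz₁, sub_nonneg.1 hz⟩, sub_nonpos.1 hw, hw₃⟩
    · rw [mul_comm] at h1 h3
      obtain ⟨hw₁, hz₃⟩ := (ordered (sub_nonneg.1 hw) (sub_nonpos.1 hz)).1 ⟨h1, h3⟩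
      exact .inr ⟨⟨sub_nonpos.1 hz, hz₃⟩, hw₁, sub_nonneg.1 hw⟩
  · rintro (⟨⟨hz₁, hz₂⟩, hw₂, hw₃⟩ | ⟨⟨hz₂, hz₃⟩, hw₁, hw₂⟩)
    · obtain ⟨h1, h3⟩ := (ordered hz₂ hw₂).2 ⟨hz₁, hw₃⟩
      exact ⟨h1, mul_nonpos_of_nonneg_of_nonpos (sub_nonneg.2 hz₂) (sub_nonpos.2 hw₂), h3⟩
    · obtain ⟨h1, h3⟩ := (ordered hw₂ hz₂).2 ⟨hw₁, hz₃⟩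
      rw [mul_comm] at h1 h3
      exact ⟨h1, mul_nonpos_of_nonpos_of_nonneg (sub_nonpos.2 hz₂) (sub_nonneg.2 hw₂), h3⟩

end Interlacing

/-- If `qᵢ = (aᵢ−z₁)(aᵢ−z₂)/((aᵢ−aⱼ)(aᵢ−aₖ))` with `a₁ < a₂ < a₃`, then all
three quantities `qᵢ` are nonnegative iff
`(z₁,z₂) ∈ [a₁,a₂]×[a₂,a₃] ∪ [a₂,a₃]×[a₁,a₂]`. -/
theorem statement12 (a₁ a₂ a₃ : ℝ) (h12 : a₁ < a₂) (h23 : a₂ < a₃) (z₁ z₂ : ℝ) :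
    (0 ≤ (a₁ - z₁) * (a₁ - z₂) / ((a₁ - a₂) * (a₁ - a₃)) ∧
     0 ≤ (a₂ - z₁) * (a₂ - z₂) / ((a₂ - a₃) * (a₂ - a₁)) ∧
     0 ≤ (a₃ - z₁) * (a₃ - z₂) / ((a₃ - a₁) * (a₃ - a₂))) ↔
    ((a₁ ≤ z₁ ∧ z₁ ≤ a₂) ∧ (a₂ ≤ z₂ ∧ z₂ ≤ a₃)) ∨
    ((a₂ ≤ z₁ ∧ z₁ ≤ a₃) ∧ (a₁ ≤ z₂ ∧ z₂ ≤ a₂)) := by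
  have h13 : a₁ < a₃ := h12.trans h23
  have d₁ : 0 < (a₁ - a₂) * (a₁ - a₃) := mul_pos_of_neg_of_neg (sub_neg.2 h12) (sub_neg.2 h13)
  have d₂ : (a₂ - a₃) * (a₂ - a₁) < 0 := mul_neg_of_neg_of_pos (sub_neg.2 h23) (sub_pos.2 h12)
  have d₃ : 0 < (a₃ - a₁) * (a₃ - a₂) := mul_pos (sub_pos.2 h13) (sub_pos.2 h23)
  simp only [le_div_iff₀ d₁, le_div_iff_of_neg d₂, le_div_iff₀ d₃, zero_mul]
  exact sub_mul_sub_alternating_iff h12 h23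
end
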